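/- arXiv:2106.08655 — 4 statements merged into one kernel-verified Lean document; each statement's English description precedes it below -/
import Mathlib

section
/- For all real μ < 0, we have λ̃(μ) ≤ λ(μ) ≤ λ_classical(μ), where λ̃(μ) = -(√(μ⁴/4 - μ² + 5) + μ²/2 - 1)/(2μ), λ(μ) = -(√(μ⁴/4 + μ² + 5) + μ²/2 - 1)/(2μ), and λ_classical(μ) = -(1 + μ²/2)/μ. -/
theorem speed_function_comparison (μ : ℝ) (hμ : μ < 0) :
    -(Real.sqrt (μ ^ 4 / 4 - μ ^ 2 + 5) + μ ^ 2 / 2 - 1) / (2 * μ) ≤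
      -(Real.sqrt (μ ^ 4 / 4 + μ ^ 2 + 5) + μ ^ 2 / 2 - 1) / (2 * μ) ∧
    -(Real.sqrt (μ ^ 4 / 4 + μ ^ 2 + 5) + μ ^ 2 / 2 - 1) / (2 * μ) ≤
      -(1 + μ ^ 2 / 2) / μ := by
  have h2μ : 2 * μ < 0 := by linarith
  have hA : Real.sqrt (μ ^ 4 / 4 - μ ^ 2 + 5) ≤ Real.sqrt (μ ^ 4 / 4 + μ ^ 2 + 5) :=
    Real.sqrt_le_sqrt (by nlinarith [sq_nonneg μ])
  have hB : Real.sqrt (μ ^ 4 / 4 + μ ^ 2 + 5) ≤ 3 + μ ^ 2 / 2 := by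
    rw [show μ ^ 4 / 4 + μ ^ 2 + 5 = (3 + μ ^ 2 / 2) ^ 2 - 2 * μ ^ 2 - 4 by ring]
    calc Real.sqrt ((3 + μ ^ 2 / 2) ^ 2 - 2 * μ ^ 2 - 4)
        ≤ Real.sqrt ((3 + μ ^ 2 / 2) ^ 2) := Real.sqrt_le_sqrt (by nlinarith [sq_nonneg μ])
      _ = 3 + μ ^ 2 / 2 := Real.sqrt_sq (by positivity)
  constructor
  · rw [div_le_div_right_of_neg h2μ]
    linarith
  · have : -(1 + μ ^ 2 / 2) / μ = -(2 + μ ^ 2) / (2 * μ) := by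
      field_simp
    rw [this, div_le_div_right_of_neg h2μ]
    linarith
end

section
/- The spore-model speed function λ̃(μ) = -(√(μ⁴/4 - μ² + 5) + μ²/2 - 1)/(2μ), defined for μ < 0, satisfies λ̃(-√2) = 1/√2, and 1/√2 ≤ λ̃(μ) for all μ < 0; i.e. the minimum of λ̃ over the negative half-axis is 1/√2, attained at μ = -√2. -/
/-!
Multiplying by `2μ < 0` turns `1/√2 ≤ λ̃(μ)` into `1 - μ²/2 - √2 μ ≤ √(μ⁴/4 - μ² + 5)`, which
follows from the factorisation
`μ⁴/4 - μ² + 5 - (1 - μ²/2 - √2 μ)² = √2 (μ + √2)² (√2 - μ)`.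
Its double root at `μ = -√2` is where the minimum is attained.
-/

noncomputable def sporeSpeed (μ : ℝ) : ℝ :=
  -(√(μ ^ 4 / 4 - μ ^ 2 + 5) + μ ^ 2 / 2 - 1) / (2 * μ)

lemma spore_discriminant_sub_sq (μ : ℝ) :
    μ ^ 4 / 4 - μ ^ 2 + 5 - (1 - μ ^ 2 / 2 - √2 * μ) ^ 2 = √2 * (μ + √2) ^ 2 * (√2 - μ) := by
  linear_combination -(√2 * μ + √2 ^ 2 + 2) * Real.sq_sqrt zero_le_two

lemma sq_le_spore_discriminant {μ : ℝ} (hμ : μ ≤ √2) :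
    (1 - μ ^ 2 / 2 - √2 * μ) ^ 2 ≤ μ ^ 4 / 4 - μ ^ 2 + 5 := by
  have hgap := spore_discriminant_sub_sq μ
  have hnonneg : 0 ≤ √2 * (μ + √2) ^ 2 * (√2 - μ) := by
    have := sub_nonneg.2 hμ
    positivity
  linarith

lemma sporeSpeed_neg_sqrt_two : sporeSpeed (-√2) = 1 / √2 := by
  have h : √2 ^ 2 = 2 := Real.sq_sqrt zero_le_two
  have hdisc : (-√2) ^ 4 / 4 - (-√2) ^ 2 + 5 = 2 ^ 2 := by
    linear_combination (√2 ^ 2 / 4 - 1 / 2) * h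
  rw [sporeSpeed, hdisc, Real.sqrt_sq zero_le_two]
  field_simp
  linear_combination h

lemma one_div_sqrt_two_le_sporeSpeed {μ : ℝ} (hμ : μ < 0) : 1 / √2 ≤ sporeSpeed μ := by
  have hsqrt : 1 - μ ^ 2 / 2 - √2 * μ ≤ √(μ ^ 4 / 4 - μ ^ 2 + 5) :=
    (le_abs_self _).trans
      (Real.abs_le_sqrt (sq_le_spore_discriminant (hμ.le.trans (Real.sqrt_nonneg 2))))
  have hscale : 1 / √2 * (2 * μ) = √2 * μ := by
    field_simp
    linear_combination -μ * Real.sq_sqrt zero_le_two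
  rw [sporeSpeed, le_div_iff_of_neg (by linarith), hscale]
  linarith

theorem spore_speed_function_min :
    (-(Real.sqrt ((-Real.sqrt 2) ^ 4 / 4 - (-Real.sqrt 2) ^ 2 + 5) +
        (-Real.sqrt 2) ^ 2 / 2 - 1) / (2 * (-Real.sqrt 2)) = 1 / Real.sqrt 2) ∧
    (∀ μ : ℝ, μ < 0 →
      1 / Real.sqrt 2 ≤ -(Real.sqrt (μ ^ 4 / 4 - μ ^ 2 + 5) + μ ^ 2 / 2 - 1) / (2 * μ)) :=
  ⟨sporeSpeed_neg_sqrt_two, fun _ => one_div_sqrt_two_le_sporeSpeed⟩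
end

section
/- The critical wave speed λ* of the seed bank model with unit parameters, i.e. the minimum over μ < 0 of λ(μ) = -(√(μ⁴/4 + μ² + 5) + μ²/2 - 1)/(2μ), satisfies λ* < √(√5 - 1). -/
theorem seedbank_critical_speed_below_crude_bound
    (lam : ℝ)
    (hLam : IsLeast {y : ℝ | ∃ μ : ℝ, μ < 0 ∧
      y = -(Real.sqrt (μ ^ 4 / 4 + μ ^ 2 + 5) + μ ^ 2 / 2 - 1) / (2 * μ)} lam) :
    lam < Real.sqrt (Real.sqrt 5 - 1) := by
  have hmem : (1 : ℝ) ∈ {y : ℝ | ∃ μ : ℝ, μ < 0 ∧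
      y = -(Real.sqrt (μ ^ 4 / 4 + μ ^ 2 + 5) + μ ^ 2 / 2 - 1) / (2 * μ)} := by
    refine ⟨-1, by norm_num, ?_⟩
    have h : ((-1 : ℝ) ^ 4 / 4 + (-1) ^ 2 + 5) = (5/2 : ℝ) ^ 2 := by norm_num
    rw [h, Real.sqrt_sq (by norm_num)]
    norm_num
  have hle : lam ≤ 1 := hLam.2 hmem
  have h2 : (1 : ℝ) < Real.sqrt (Real.sqrt 5 - 1) := by
    rw [show (1:ℝ) = Real.sqrt 1 from (Real.sqrt_one).symm]
    apply Real.sqrt_lt_sqrt (by norm_num)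
    have : (2 : ℝ) < Real.sqrt 5 := by
      have := Real.lt_sqrt (x := 2) (y := 5) (by norm_num)
      rw [this]; norm_num
    have h1 : Real.sqrt 1 = 1 := Real.sqrt_one
    linarith
  linarith
end

section
/- Let p ∈ (1,2] and let X₁,…,Xₙ be independent nonnegative random variables in L^p, and c₁,…,cₙ ≥ 0. Then E[(∑ₖ cₖXₖ)^p] − (E[∑ₖ cₖXₖ])^p ≤ ∑ₖ cₖ^p (E[Xₖ^p] − (E[Xₖ])^p). -/
/-! For `1 ≤ p ≤ 2` and `b ≥ 0` the map `t ↦ (t + b) ^ p - t ^ p` is concave on `[0, ∞)`: its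
second derivative is `p (p - 1) ((t + b) ^ (p - 2) - t ^ (p - 2)) ≤ 0`. Jensen's inequality for it
gives `E[(Z + b) ^ p] ≤ (E[Z] + b) ^ p + G(Z)`, where `G(Z) = E[Z ^ p] - E[Z] ^ p`. For independent
`S` and `Y`, Fubini on the product of their laws lets us apply this to `Y` with `b = S` and then to
`S` with `b = E[Y]`, so `G(S + Y) ≤ G(S) + G(Y)`. Induction on the number of summands and the
homogeneity `G(c Z) = c ^ p G(Z)` finish the proof. -/

open MeasureTheory ProbabilityTheory Set

noncomputable def rpowJensenGap {Ω : Type*} [MeasurableSpace Ω] (p : ℝ) (Z : Ω → ℝ)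
    (μ : Measure Ω) : ℝ :=
  ∫ ω, Z ω ^ p ∂μ - (∫ ω, Z ω ∂μ) ^ p

section Concavity

variable {p : ℝ}

lemma continuousOn_rpow_add_sub_rpow (hp : 0 ≤ p) (b : ℝ) :
    ContinuousOn (fun t : ℝ => (t + b) ^ p - t ^ p) (Ici 0) :=
  ((continuous_add_const b).continuousOn.rpow_const fun _ _ => Or.inr hp).sub
    (continuousOn_id.rpow_const fun _ _ => Or.inr hp)

lemma hasDerivAt_rpow_add_sub_rpow (q b : ℝ) {x : ℝ} (hx : 0 < x) (hb : 0 ≤ b) :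
    HasDerivAt (fun t : ℝ => (t + b) ^ q - t ^ q) (q * ((x + b) ^ (q - 1) - x ^ (q - 1))) x := by
  have hxb : x + b ≠ 0 := by positivity
  have h := (Real.hasDerivAt_rpow_const (p := q) (Or.inl hxb)).comp x
    ((hasDerivAt_id x).add_const b)
  simp only [Function.comp_def, id, mul_one] at h
  exact (h.sub (Real.hasDerivAt_rpow_const (Or.inl hx.ne'))).congr_deriv (by ring)

lemma concaveOn_rpow_add_sub_rpow (hp1 : 1 ≤ p) (hp2 : p ≤ 2) {b : ℝ} (hb : 0 ≤ b) :
    ConcaveOn ℝ (Ici 0) (fun t : ℝ => (t + b) ^ p - t ^ p) := by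
  refine concaveOn_of_hasDerivWithinAt2_nonpos (convex_Ici 0)
    (continuousOn_rpow_add_sub_rpow (by linarith) b)
    (f' := fun t => p * ((t + b) ^ (p - 1) - t ^ (p - 1)))
    (f'' := fun t => p * ((p - 1) * ((t + b) ^ (p - 1 - 1) - t ^ (p - 1 - 1))))
    ?_ ?_ ?_ <;> intro x hx <;> rw [interior_Ici, mem_Ioi] at hx
  · exact (hasDerivAt_rpow_add_sub_rpow p b hx hb).hasDerivWithinAt
  · exact ((hasDerivAt_rpow_add_sub_rpow (p - 1) b hx hb).const_mul p).hasDerivWithinAt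
  · have hdecay : (x + b) ^ (p - 1 - 1) ≤ x ^ (p - 1 - 1) :=
      Real.rpow_le_rpow_of_nonpos hx (by linarith) (by linarith)
    exact mul_nonpos_of_nonneg_of_nonpos (by linarith)
      (mul_nonpos_of_nonneg_of_nonpos (by linarith) (by linarith))

end Concavity

section JensenGap

variable {Ω : Type*} [MeasurableSpace Ω] {μ : Measure Ω} {p : ℝ}

lemma MeasureTheory.MemLp.integrable_rpow_of_nonneg {Z : Ω → ℝ} (hp : 0 < p)
    (hZ : MemLp Z (ENNReal.ofReal p) μ) (hZ0 : 0 ≤ᵐ[μ] Z) :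
    Integrable (fun ω => Z ω ^ p) μ := by
  have h := hZ.integrable_norm_rpow (by simpa using hp) ENNReal.ofReal_ne_top
  rw [ENNReal.toReal_ofReal hp.le] at h
  refine h.congr ?_
  filter_upwards [hZ0] with ω hω
  rw [Real.norm_of_nonneg hω]

lemma rpowJensenGap_const_mul {Z : Ω → ℝ} (hZ0 : 0 ≤ᵐ[μ] Z) {c : ℝ} (hc : 0 ≤ c) :
    rpowJensenGap p (fun ω => c * Z ω) μ = c ^ p * rpowJensenGap p Z μ := by
  have hpow : ∫ ω, (c * Z ω) ^ p ∂μ = c ^ p * ∫ ω, Z ω ^ p ∂μ := by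
    rw [← integral_const_mul]
    refine integral_congr_ae ?_
    filter_upwards [hZ0] with ω hω
    exact Real.mul_rpow hc hω
  rw [rpowJensenGap, rpowJensenGap, hpow, integral_const_mul,
    Real.mul_rpow hc (integral_nonneg_of_ae hZ0)]
  ring

variable [IsProbabilityMeasure μ]

lemma integral_rpow_add_const_le (hp1 : 1 ≤ p) (hp2 : p ≤ 2) {Z : Ω → ℝ}
    (hZ : MemLp Z (ENNReal.ofReal p) μ) (hZ0 : 0 ≤ᵐ[μ] Z) {b : ℝ} (hb : 0 ≤ b) :
    ∫ ω, (Z ω + b) ^ p ∂μ ≤ (∫ ω, Z ω ∂μ + b) ^ p + rpowJensenGap p Z μ := by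
  have hp0 : 0 < p := by linarith
  have hZb0 : 0 ≤ᵐ[μ] fun ω => Z ω + b := by
    filter_upwards [hZ0] with ω hω
    exact add_nonneg hω hb
  have hZbp : Integrable (fun ω => (Z ω + b) ^ p) μ :=
    (hZ.add (memLp_const b)).integrable_rpow_of_nonneg hp0 hZb0
  have hZp := hZ.integrable_rpow_of_nonneg hp0 hZ0
  have hjensen := (concaveOn_rpow_add_sub_rpow hp1 hp2 hb).le_map_integral
    (continuousOn_rpow_add_sub_rpow hp0.le b) isClosed_Ici hZ0
    (hZ.integrable (by simpa using hp1)) (hZbp.sub hZp)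
  rw [integral_sub hZbp hZp] at hjensen
  rw [rpowJensenGap]
  linarith

lemma integral_rpow_add_le_of_indepFun (hp1 : 1 ≤ p) (hp2 : p ≤ 2) {S Y : Ω → ℝ}
    (hS : MemLp S (ENNReal.ofReal p) μ) (hY : MemLp Y (ENNReal.ofReal p) μ)
    (hS0 : 0 ≤ᵐ[μ] S) (hY0 : 0 ≤ᵐ[μ] Y) (hSY : IndepFun S Y μ) :
    ∫ ω, (S ω + Y ω) ^ p ∂μ ≤ ∫ ω, (S ω + ∫ ω', Y ω' ∂μ) ^ p ∂μ + rpowJensenGap p Y μ := by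
  have hp0 : 0 < p := by linarith
  set m := ∫ ω, Y ω ∂μ
  have hSm := hS.aestronglyMeasurable.aemeasurable
  have hYm := hY.aestronglyMeasurable.aemeasurable
  have hF : Measurable fun z : ℝ × ℝ => (z.1 + z.2) ^ p := by fun_prop
  have hprod : μ.map (fun ω => (S ω, Y ω)) = (μ.map S).prod (μ.map Y) :=
    (indepFun_iff_map_prod_eq_prod_map_map hSm hYm).1 hSY
  have hFint : Integrable (fun z : ℝ × ℝ => (z.1 + z.2) ^ p) ((μ.map S).prod (μ.map Y)) := by
    rw [← hprod, integrable_map_measure hF.aestronglyMeasurable (hSm.prodMk hYm)]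
    refine (hS.add hY).integrable_rpow_of_nonneg hp0 ?_
    filter_upwards [hS0, hY0] with ω hSω hYω
    exact add_nonneg hSω hYω
  have hinner : ∀ᵐ s ∂(μ.map S),
      ∫ y, (s + y) ^ p ∂(μ.map Y) ≤ (s + m) ^ p + rpowJensenGap p Y μ := by
    filter_upwards [(ae_map_iff hSm measurableSet_Ici).2 hS0] with s hs
    have hpow_s : Measurable fun y => (s + y) ^ p := by fun_prop
    rw [integral_map hYm hpow_s.aestronglyMeasurable]
    simpa only [add_comm s] using integral_rpow_add_const_le hp1 hp2 hY hY0 hs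
  have hpow_m : Measurable fun s => (s + m) ^ p := by fun_prop
  have := Measure.isProbabilityMeasure_map (μ := μ) hSm
  have hRint : Integrable (fun s => (s + m) ^ p) (μ.map S) := by
    rw [integrable_map_measure hpow_m.aestronglyMeasurable hSm]
    refine (hS.add (memLp_const m)).integrable_rpow_of_nonneg hp0 ?_
    filter_upwards [hS0] with ω hω
    exact add_nonneg hω (integral_nonneg_of_ae hY0)
  calc ∫ ω, (S ω + Y ω) ^ p ∂μ = ∫ s, ∫ y, (s + y) ^ p ∂(μ.map Y) ∂(μ.map S) := by
        rw [← integral_prod _ hFint, ← hprod,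
          integral_map (hSm.prodMk hYm) hF.aestronglyMeasurable]
    _ ≤ ∫ s, ((s + m) ^ p + rpowJensenGap p Y μ) ∂(μ.map S) :=
        integral_mono_ae hFint.integral_prod_left (hRint.add (integrable_const _)) hinner
    _ = ∫ ω, (S ω + m) ^ p ∂μ + rpowJensenGap p Y μ := by
        rw [integral_add hRint (integrable_const _), integral_const, probReal_univ, one_smul,
          integral_map hSm hpow_m.aestronglyMeasurable]

lemma rpowJensenGap_add_le_of_indepFun (hp1 : 1 ≤ p) (hp2 : p ≤ 2) {S Y : Ω → ℝ}
    (hS : MemLp S (ENNReal.ofReal p) μ) (hY : MemLp Y (ENNReal.ofReal p) μ)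
    (hS0 : 0 ≤ᵐ[μ] S) (hY0 : 0 ≤ᵐ[μ] Y) (hSY : IndepFun S Y μ) :
    rpowJensenGap p (fun ω => S ω + Y ω) μ ≤ rpowJensenGap p S μ + rpowJensenGap p Y μ := by
  have hp1' : 1 ≤ ENNReal.ofReal p := by simpa using hp1
  have hY_step := integral_rpow_add_le_of_indepFun hp1 hp2 hS hY hS0 hY0 hSY
  have hS_step := integral_rpow_add_const_le hp1 hp2 hS hS0 (integral_nonneg_of_ae hY0)
  rw [rpowJensenGap, integral_add (hS.integrable hp1') (hY.integrable hp1')]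
  rw [rpowJensenGap] at hS_step ⊢
  linarith

lemma rpowJensenGap_sum_le_of_iIndepFun (hp1 : 1 ≤ p) (hp2 : p ≤ 2) {ι : Type*}
    {Y : ι → Ω → ℝ} (hY : ∀ i, MemLp (Y i) (ENNReal.ofReal p) μ) (hY0 : ∀ i, 0 ≤ᵐ[μ] Y i)
    (hind : iIndepFun Y μ) (s : Finset ι) :
    rpowJensenGap p (fun ω => ∑ i ∈ s, Y i ω) μ ≤ ∑ i ∈ s, rpowJensenGap p (Y i) μ := by
  induction s using Finset.cons_induction with
  | empty => simp [rpowJensenGap]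
  | cons a s ha ih =>
    have hsum0 : 0 ≤ᵐ[μ] fun ω => ∑ i ∈ s, Y i ω := by
      filter_upwards [(Filter.eventually_all_finset s).2 fun i _ => hY0 i] with ω hω
      exact Finset.sum_nonneg hω
    have hindep : IndepFun (Y a) (fun ω => ∑ i ∈ s, Y i ω) μ := by
      simpa only [Finset.sum_fn] using
        (hind.indepFun_finsetSum_of_notMem₀ (fun i => (hY i).aestronglyMeasurable.aemeasurable)
          ha).symm
    simp only [Finset.sum_cons]
    linarith [rpowJensenGap_add_le_of_indepFun hp1 hp2 (hY a)
      (memLp_finsetSum s fun i _ => hY i) (hY0 a) hsum0 hindep]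

end JensenGap

theorem neveu_lemma
    {Ω : Type*} [MeasurableSpace Ω] (P : Measure Ω) [IsProbabilityMeasure P]
    (p : ℝ) (hp1 : 1 < p) (hp2 : p ≤ 2)
    (n : ℕ) (X : Fin n → Ω → ℝ)
    (hIndep : iIndepFun X P)
    (hNonneg : ∀ i, ∀ ω, 0 ≤ X i ω)
    (hLp : ∀ i, MemLp (X i) (ENNReal.ofReal p) P)
    (c : Fin n → ℝ) (hc : ∀ i, 0 ≤ c i) :
    (∫ ω, (∑ i, c i * X i ω) ^ p ∂P) - (∫ ω, ∑ i, c i * X i ω ∂P) ^ p ≤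
      ∑ i, (c i) ^ p * ((∫ ω, (X i ω) ^ p ∂P) - (∫ ω, X i ω ∂P) ^ p) := by
  have hX0 : ∀ i, 0 ≤ᵐ[P] X i := fun i => ae_of_all P (hNonneg i)
  have hcX : iIndepFun (fun i ω => c i * X i ω) P :=
    hIndep.comp (fun i x => c i * x) fun i => measurable_const_mul (c i)
  calc rpowJensenGap p (fun ω => ∑ i, c i * X i ω) P
      ≤ ∑ i, rpowJensenGap p (fun ω => c i * X i ω) P :=
        rpowJensenGap_sum_le_of_iIndepFun hp1.le hp2 (fun i => (hLp i).const_mul (c i))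
          (fun i => (hX0 i).mono fun ω hω => mul_nonneg (hc i) hω) hcX Finset.univ
    _ = ∑ i, c i ^ p * rpowJensenGap p (X i) P :=
        Finset.sum_congr rfl fun i _ => rpowJensenGap_const_mul (hX0 i) (hc i)
end
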